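/- If a relation R ⊆ {0,1}^n is Horn (closed under coordinate-wise ∧), then R is safely OR-free: neither R nor any relation obtained from R by identification of variables yields OR = {01,10,11} by substitution of constants. -/

import Mathlib

/-- The binary OR relation {01, 10, 11}. -/
def OrRel : Set (Fin 2 → Bool) := {x | (x 0 || x 1) = true}

/-- The relation obtained from `R` by identification of variables along `σ`. -/
def Ident {n m : ℕ} (σ : Fin n → Fin m) (R : Set (Fin n → Bool)) : Set (Fin m → Bool) :=
  {x | (fun i => x (σ i)) ∈ R}

/-- Substitution of constants turning an `m`-ary relation into a binary relation:
each position gets one of the two variables or a constant. -/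
def Subst2 {m : ℕ} (ξ : Fin m → (Fin 2 ⊕ Bool)) (R : Set (Fin m → Bool)) :
    Set (Fin 2 → Bool) :=
  {x | (fun i => Sum.elim x id (ξ i)) ∈ R}

/-- Each variable is used at most once among the positions. -/
def InjOnVars {m : ℕ} (ξ : Fin m → (Fin 2 ⊕ Bool)) : Prop :=
  ∀ i i' j, ξ i = Sum.inl j → ξ i' = Sum.inl j → i = i'

/-!
Identification of variables and substitution of constants are both pullbacks along maps that
commute with coordinate-wise `&&` (a constant `c` is preserved because `c && c = c`), so they
preserve Horn relations. But OR is not Horn: `01 && 10 = 00 ∉ OR`.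
-/

def IsHorn {ι : Type*} (R : Set (ι → Bool)) : Prop :=
  ∀ a ∈ R, ∀ b ∈ R, (fun i => a i && b i) ∈ R

namespace IsHorn

variable {n m : ℕ}

theorem ident {R : Set (Fin n → Bool)} (hR : IsHorn R) (σ : Fin n → Fin m) :
    IsHorn (Ident σ R) :=
  fun _ ha _ hb => hR _ ha _ hb

theorem subst2 {R : Set (Fin m → Bool)} (hR : IsHorn R) (ξ : Fin m → (Fin 2 ⊕ Bool)) :
    IsHorn (Subst2 ξ R) := by
  intro a ha b hb
  have hand : (fun i => Sum.elim (fun j => a j && b j) id (ξ i)) =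
      fun i => Sum.elim a id (ξ i) && Sum.elim b id (ξ i) := by
    funext i
    rcases ξ i with j | c
    · rfl
    · exact (Bool.and_self c).symm
  change _ ∈ R
  rw [hand]
  exact hR _ ha _ hb

end IsHorn

theorem not_isHorn_orRel : ¬ IsHorn OrRel := by
  intro h
  simpa [OrRel] using h ![false, true] (by simp [OrRel]) ![true, false] (by simp [OrRel])

theorem IsHorn.subst2_ne_orRel {m : ℕ} {R : Set (Fin m → Bool)} (hR : IsHorn R)
    (ξ : Fin m → (Fin 2 ⊕ Bool)) : Subst2 ξ R ≠ OrRel := fun h =>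
  not_isHorn_orRel (h ▸ hR.subst2 ξ)

theorem horn_implies_safely_or_free (n : ℕ) (R : Set (Fin n → Bool))
    (hHorn : ∀ a ∈ R, ∀ b ∈ R, (fun i => a i && b i) ∈ R) :
    -- R itself is OR-free
    (∀ ξ : Fin n → (Fin 2 ⊕ Bool), InjOnVars ξ → Subst2 ξ R ≠ OrRel) ∧
    -- and so is every relation obtained from R by identification of variables
    (∀ m : ℕ, ∀ σ : Fin n → Fin m, ∀ ξ : Fin m → (Fin 2 ⊕ Bool),
      InjOnVars ξ → Subst2 ξ (Ident σ R) ≠ OrRel) :=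
  have hR : IsHorn R := hHorn
  ⟨fun ξ _ => hR.subst2_ne_orRel ξ, fun _ σ ξ _ => (hR.ident σ).subst2_ne_orRel ξ⟩
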